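/- arXiv:2309.15196 — 3 statements merged into one kernel-verified Lean document; each statement's English description precedes it below -/
import Mathlib

section
/- For a connected graph G and connected graph H, any function f : V(G) → V(H), and any g ∈ V(G), the distance in G ⊗_f H between two vertices (g,h) and (g,h') equals the distance between h and h' in H. -/
open SimpleGraph

/-- The Sierpiński product of graphs `G` and `H` with respect to `f`. -/
def sierpinskiProd {α β : Type*} (G : SimpleGraph α) (H : SimpleGraph β) (f : α → β) :
    SimpleGraph (α × β) where
  Adj p q := (p.1 = q.1 ∧ H.Adj p.2 q.2) ∨ (G.Adj p.1 q.1 ∧ p.2 = f q.1 ∧ q.2 = f p.1)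
  symm := by
    constructor
    rintro p q (⟨h1, h2⟩ | ⟨h1, h2, h3⟩)
    · exact Or.inl ⟨h1.symm, h2.symm⟩
    · exact Or.inr ⟨h1.symm, h3, h2⟩
  loopless := by
    constructor
    rintro p (⟨-, h⟩ | ⟨h, -⟩)
    · exact H.loopless.irrefl _ h
    · exact G.loopless.irrefl _ h

/-- A set `S` of vertices resolves the graph `G`. -/
def IsResolvingSet {V : Type*} (G : SimpleGraph V) (S : Set V) : Prop :=
  ∀ u v : V, (∀ s ∈ S, G.dist u s = G.dist v s) → u = v

/-- The metric dimension of a graph. -/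
noncomputable def metricDim {V : Type*} (G : SimpleGraph V) : ℕ :=
  sInf {n | ∃ S : Set V, S.ncard = n ∧ IsResolvingSet G S}

/-- A graph is a path if it is isomorphic to some path graph. -/
def IsPathGraph {V : Type*} (G : SimpleGraph V) : Prop :=
  ∃ n, Nonempty (G ≃g pathGraph n)

/-- Key invariant: for any walk in the Sierpiński product, the min-matching distance
between the unordered pairs `(u.2, f u.1)` and `(v.2, f v.1)` is at most the length. -/
lemma sierpinski_pair_le {α β : Type*} (G : SimpleGraph α) (H : SimpleGraph β)
    (f : α → β) (hH : H.Connected) :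
    ∀ {u v : α × β} (W : (sierpinskiProd G H f).Walk u v),
      min (H.dist u.2 v.2 + H.dist (f u.1) (f v.1))
          (H.dist u.2 (f v.1) + H.dist (f u.1) v.2) ≤ W.length := by
  intro u v W
  induction W with
  | nil => simp [SimpleGraph.dist_self]
  | @cons a b c hadj W ih =>
    rcases hadj with ⟨h1, h2⟩ | ⟨hadj, h2, h3⟩
    · -- type-1 edge: same layer, H-adjacent
      have hd : H.dist a.2 b.2 ≤ 1 := by
        simpa using H.dist_le h2.toWalk
      have t1 : H.dist a.2 c.2 ≤ H.dist a.2 b.2 + H.dist b.2 c.2 := hH.dist_triangle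
      have t2 : H.dist a.2 (f c.1) ≤ H.dist a.2 b.2 + H.dist b.2 (f c.1) := hH.dist_triangle
      simp only [h1] at *
      show _ ≤ W.length + 1
      omega
    · -- type-2 edge: the pair swaps
      show _ ≤ W.length + 1; simp only [h2, ← h3]
      omega
  
theorem sierpinskiProd_dist_layer {α β : Type*} (G : SimpleGraph α) (H : SimpleGraph β)
    (f : α → β) (hG : G.Connected) (hH : H.Connected) (g : α) (h h' : β) :
    (sierpinskiProd G H f).dist (g, h) (g, h') = H.dist h h' := by
  -- layer embedding hom
  let φ : H →g sierpinskiProd G H f :=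
    ⟨fun b => (g, b), fun hadj => Or.inl ⟨rfl, hadj⟩⟩
  obtain ⟨p, hp⟩ := hH.exists_walk_length_eq_dist h h'
  have hle : (sierpinskiProd G H f).dist (g, h) (g, h') ≤ H.dist h h' := by
    calc (sierpinskiProd G H f).dist (g, h) (g, h') ≤ (p.map φ).length :=
          SimpleGraph.dist_le _
      _ = H.dist h h' := by rw [Walk.length_map, hp]
  have hreach : (sierpinskiProd G H f).Reachable (g, h) (g, h') := ⟨p.map φ⟩
  obtain ⟨W, hW⟩ := hreach.exists_walk_length_eq_dist
  have hge := sierpinski_pair_le G H f hH W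
  have htri : H.dist h h' ≤ H.dist h (f g) + H.dist (f g) h' := hH.dist_triangle
  have hself : H.dist (f g) (f g) = 0 := SimpleGraph.dist_self
  simp only at hge
  omega
end

section
/- For n ≥ 2, if T₁ = P_n is the path on n vertices and T₂ is a tree that is not a path, then dim_S(T₁,T₂) = n·(dim(T₂) − 2) + 2. -/
open SimpleGraph

section ProductDist

variable {β : Type*} (T : SimpleGraph β) (F : ℕ → β)

/-- distance from `(g,a)` to `(g+k, b)` in the product -/
noncomputable def chain : ℕ → ℕ → β → β → ℕ
  | 0, _, a, b => T.dist a b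
  | (k+1), g, a, b => T.dist a (F (g+1)) + 1 + chain k (g+1) (F g) b

@[simp] theorem chain_zero (g : ℕ) (a b : β) : chain T F 0 g a b = T.dist a b := rfl

theorem chain_succ (k g : ℕ) (a b : β) :
    chain T F (k+1) g a b = T.dist a (F (g+1)) + 1 + chain T F k (g+1) (F g) b := rfl

variable {n : ℕ}

/-- the Sierpiński product of `pathGraph n` with `T` -/
def SP (n : ℕ) : SimpleGraph (Fin n × β) :=
  sierpinskiProd (pathGraph n) T (fun i => F i.val)

/-- candidate distance function, ℕ-indexed -/
noncomputable def DDn (gu : ℕ) (a : β) (gv : ℕ) (b : β) : ℕ :=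
  if gu ≤ gv then chain T F (gv - gu) gu a b
  else chain T F (gu - gv) gv b a

/-- candidate distance function on the product -/
noncomputable def DD (u v : Fin n × β) : ℕ := DDn T F u.1.val u.2 v.1.val v.2

theorem chain_top (k g : ℕ) (a b : β) :
    chain T F (k+1) g a b = chain T F k g a (F (g+k+1)) + 1 + T.dist (F (g+k)) b := by
  induction k generalizing g a with
  | zero => simp [chain_succ]
  | succ k IH =>
      rw [chain_succ, IH (g+1) (F g), chain_succ]
      have h1 : g + 1 + k + 1 = g + k + 2 := by omega
      have h2 : g + 1 + k = g + k + 1 := by omega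
      rw [h1, h2]
      have h3 : g + (k+1) + 1 = g + k + 2 := by omega
      have h4 : g + (k+1) = g + k + 1 := by omega
      rw [h3, h4]
      ring

theorem chain_lipschitz_fst (hT : T.Connected) (k g : ℕ) (a a' b : β) :
    chain T F k g a b ≤ chain T F k g a' b + T.dist a a' := by
  cases k with
  | zero =>
      show T.dist a b ≤ T.dist a' b + T.dist a a'
      calc T.dist a b ≤ T.dist a a' + T.dist a' b := hT.dist_triangle
        _ = T.dist a' b + T.dist a a' := by rw [add_comm]
  | succ k =>
      rw [chain_succ, chain_succ]
      have : T.dist a (F (g+1)) ≤ T.dist a a' + T.dist a' (F (g+1)) := hT.dist_triangle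
      omega

theorem chain_lipschitz_snd (hT : T.Connected) (k g : ℕ) (a b b' : β) :
    chain T F k g a b ≤ chain T F k g a b' + T.dist b b' := by
  induction k generalizing g a with
  | zero =>
      show T.dist a b ≤ T.dist a b' + T.dist b b'
      calc T.dist a b ≤ T.dist a b' + T.dist b' b := hT.dist_triangle
        _ = _ := by rw [SimpleGraph.dist_comm (u := b') (v := b)]
  | succ k IH =>
      rw [chain_succ, chain_succ]
      have := IH (g+1) (F g)
      omega

end ProductDist


section ProductDist2

variable {β : Type*} (T : SimpleGraph β) (F : ℕ → β) {n : ℕ}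

theorem DDn_same (g : ℕ) (a b : β) : DDn T F g a g b = T.dist a b := by
  unfold DDn
  rw [if_pos le_rfl]
  simp

theorem DDn_lt {gu gv : ℕ} (h : gu ≤ gv) (a b : β) :
    DDn T F gu a gv b = chain T F (gv - gu) gu a b := by
  unfold DDn; rw [if_pos h]

theorem DDn_gt {gu gv : ℕ} (h : gv < gu) (a b : β) :
    DDn T F gu a gv b = chain T F (gu - gv) gv b a := by
  unfold DDn; rw [if_neg (by omega)]

theorem DDn_step_same (hT : T.Connected) (g gv : ℕ) (a a' c : β) (h : T.Adj a a') :
    DDn T F g a gv c ≤ DDn T F g a' gv c + 1 := by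
  have hd : T.dist a a' = 1 := SimpleGraph.dist_eq_one_iff_adj.mpr h
  unfold DDn
  by_cases hc : g ≤ gv
  · rw [if_pos hc, if_pos hc]
    have := chain_lipschitz_fst T F hT (gv - g) g a a' c
    omega
  · rw [if_neg hc, if_neg hc]
    have := chain_lipschitz_snd T F hT (g - gv) gv c a a'
    omega

theorem DDn_gate_up {g gv : ℕ} (h : g + 1 ≤ gv) (c : β) :
    DDn T F g (F (g+1)) gv c = DDn T F (g+1) (F g) gv c + 1 := by
  rw [DDn_lt T F (by omega), DDn_lt T F h]
  rw [(by omega : gv - g = (gv - (g+1)) + 1), chain_succ, SimpleGraph.dist_self]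
  omega

theorem DDn_gate_down {g gv : ℕ} (h : gv ≤ g) (c : β) :
    DDn T F (g+1) (F g) gv c = DDn T F g (F (g+1)) gv c + 1 := by
  rw [DDn_gt T F (by omega : gv < g + 1)]
  have htop : chain T F ((g - gv) + 1) gv c (F g)
      = chain T F (g - gv) gv c (F (g+1)) + 1 + T.dist (F g) (F g) := by
    have := chain_top T F (g - gv) gv c (F g)
    rwa [(by omega : gv + (g - gv) + 1 = g + 1), (by omega : gv + (g - gv) = g)] at this
  rw [(by omega : g + 1 - gv = (g - gv) + 1), htop, SimpleGraph.dist_self]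
  rcases eq_or_lt_of_le h with heq | hlt
  · subst heq
    have h1 : DDn T F gv (F (gv+1)) gv c = T.dist (F (gv+1)) c := DDn_same T F gv _ c
    have h2 : gv - gv = 0 := by omega
    rw [h1, h2, chain_zero, SimpleGraph.dist_comm (u := c)]
  · have h1 : DDn T F g (F (g+1)) gv c = chain T F (g - gv) gv c (F (g+1)) :=
      DDn_gt T F hlt _ _
    omega

theorem DD_step (hT : T.Connected) (u u' v : Fin n × β) (h : (SP T F n).Adj u u') :
    DD T F u v ≤ DD T F u' v + 1 := by
  unfold DD
  rcases h with ⟨heq, hadj⟩ | ⟨hpg, h2, h3⟩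
  · rw [heq]
    exact DDn_step_same T F hT _ _ _ _ _ hadj
  · have hu2 : u.2 = F u'.1.val := h2
    have hu'2 : u'.2 = F u.1.val := h3
    rcases pathGraph_adj.mp hpg with hA | hB
    · -- u.1.val + 1 = u'.1.val
      rw [← hA] at hu2
      rw [hu2, hu'2, ← hA]
      by_cases hc : u.1.val + 1 ≤ v.1.val
      · rw [DDn_gate_up T F hc]
      · rw [DDn_gate_down T F (by omega)]
        omega
    · -- u'.1.val + 1 = u.1.val
      rw [← hB] at hu'2
      rw [hu2, hu'2, ← hB]
      by_cases hc : u'.1.val + 1 ≤ v.1.val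
      · rw [DDn_gate_up T F hc]
        omega
      · rw [DDn_gate_down T F (by omega)]

theorem DD_le_walk (hT : T.Connected) {u v : Fin n × β} (w : (SP T F n).Walk u v) :
    DD T F u v ≤ w.length := by
  induction w with
  | nil =>
      unfold DD
      rw [DDn_same]
      simp
  | @cons x y z h w' IH =>
      have := DD_step T F hT x y z h
      simp only [SimpleGraph.Walk.length_cons]
      omega

/-- embedding of the `g`-th copy -/
def copyHom (g : Fin n) : T →g SP T F n where
  toFun b := (g, b)
  map_rel' h := Or.inl ⟨rfl, h⟩

theorem gate_adj (gl gr : Fin n) (h1 : gl.val + 1 = gr.val) :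
    (SP T F n).Adj (gl, F (gl.val + 1)) (gr, F gl.val) := by
  refine Or.inr ⟨pathGraph_adj.mpr (Or.inl h1), ?_, rfl⟩
  show F (gl.val + 1) = F gr.val
  rw [h1]

theorem exists_walk_chain (hT : T.Connected) :
    ∀ (k : ℕ) (gu gv : Fin n) (a b : β), gu.val ≤ gv.val → gv.val - gu.val = k →
    ∃ w : (SP T F n).Walk (gu, a) (gv, b), w.length = chain T F k gu.val a b := by
  intro k
  induction k with
  | zero =>
      intro gu gv a b hle hsub
      have : gu = gv := Fin.ext (by omega)
      subst this
      obtain ⟨p, hp⟩ := hT.exists_walk_length_eq_dist a b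
      exact ⟨p.map (copyHom T F gu), (SimpleGraph.Walk.length_map _ _).trans hp⟩
  | succ k IH =>
      intro gu gv a b hle hsub
      have hlt : gu.val + 1 < n := by have := gv.isLt; omega
      obtain ⟨p, hp⟩ := hT.exists_walk_length_eq_dist a (F (gu.val+1))
      obtain ⟨w₂, hw₂⟩ := IH ⟨gu.val+1, hlt⟩ gv (F gu.val) b (by simp; omega) (by simp; omega)
      refine ⟨(p.map (copyHom T F gu)).append
        (SimpleGraph.Walk.cons (gate_adj T F gu ⟨gu.val+1, hlt⟩ rfl) w₂), ?_⟩
      have hl := SimpleGraph.Walk.length_append (p.map (copyHom T F gu))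
        (SimpleGraph.Walk.cons (gate_adj T F gu ⟨gu.val+1, hlt⟩ rfl) w₂)
      have h3 := SimpleGraph.Walk.length_map (copyHom T F gu) p
      have h4 := SimpleGraph.Walk.length_cons (gate_adj T F gu ⟨gu.val+1, hlt⟩ rfl) w₂
      have hw₂' : w₂.length = chain T F k (gu.val+1) (F gu.val) b := hw₂
      show _ = T.dist a (F (gu.val+1)) + 1 + chain T F k (gu.val+1) (F gu.val) b
      exact hl.trans ((congrArg₂ (· + ·) (h3.trans hp) (h4.trans (congrArg (· + 1) hw₂'))).trans
        (by omega))

theorem SP_dist_pair (hT : T.Connected) (gu gv : Fin n) (a b : β) :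
    (SP T F n).dist (gu, a) (gv, b) = DDn T F gu.val a gv.val b := by
  rcases le_or_gt gu.val gv.val with hle | hlt
  · obtain ⟨w, hw⟩ := exists_walk_chain T F hT (gv.val - gu.val) gu gv a b hle rfl
    refine le_antisymm ?_ ?_
    · rw [DDn_lt T F hle, ← hw]
      exact SimpleGraph.dist_le w
    · obtain ⟨p, hp⟩ := (SimpleGraph.Walk.reachable w).exists_walk_length_eq_dist
      have h2 := DD_le_walk T F hT p
      unfold DD at h2
      simp only at h2
      omega
  · obtain ⟨w, hw⟩ := exists_walk_chain T F hT (gu.val - gv.val) gv gu b a (by omega) rfl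
    refine le_antisymm ?_ ?_
    · rw [DDn_gt T F hlt, ← hw, SimpleGraph.dist_comm]
      exact SimpleGraph.dist_le w
    · have hr : (SP T F n).Reachable (gu, a) (gv, b) := (SimpleGraph.Walk.reachable w).symm
      obtain ⟨p, hp⟩ := hr.exists_walk_length_eq_dist
      have h2 := DD_le_walk T F hT p
      unfold DD at h2
      simp only at h2
      omega

end ProductDist2

section DimHelpers

variable {V : Type*} (G : SimpleGraph V)

theorem univ_resolving (hG : G.Connected) : IsResolvingSet G (Set.univ : Set V) := by
  intro u v h
  have := h u (Set.mem_univ u)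
  rw [SimpleGraph.dist_self] at this
  exact (hG.dist_eq_zero_iff.mp this.symm).symm

theorem metricDim_le_of_resolving {S : Set V} (hS : IsResolvingSet G S) :
    metricDim G ≤ S.ncard :=
  Nat.sInf_le ⟨S, rfl, hS⟩

theorem exists_min_resolving (hG : G.Connected) :
    ∃ S : Set V, S.ncard = metricDim G ∧ IsResolvingSet G S := by
  have hne : {n | ∃ S : Set V, S.ncard = n ∧ IsResolvingSet G S}.Nonempty :=
    ⟨(Set.univ : Set V).ncard, Set.univ, rfl, univ_resolving G hG⟩
  exact Nat.sInf_mem hne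

theorem resolving_mono {S S' : Set V} (h : S ⊆ S') (hS : IsResolvingSet G S) :
    IsResolvingSet G S' :=
  fun u v hd => hS u v (fun s hs => hd s (h hs))

end DimHelpers

section FiberSum

variable {n : ℕ} {β : Type*} [Fintype β] [DecidableEq β]

theorem ncard_fiber_sum (R : Set (Fin n × β)) :
    R.ncard = ∑ g : Fin n, ({h : β | (g, h) ∈ R}).ncard := by
  classical
  rw [Set.ncard_eq_toFinset_card' R]
  rw [Finset.card_eq_sum_card_fiberwise
    (f := Prod.fst) (t := Finset.univ) (fun x _ => Finset.mem_univ x.1)]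
  congr 1
  funext g
  rw [Set.ncard_eq_toFinset_card' _]
  apply Finset.card_bij (fun p _ => p.2)
  · intro p hp
    simp only [Finset.mem_filter, Set.mem_toFinset] at hp
    simp only [Set.mem_toFinset, Set.mem_setOf_eq]
    obtain ⟨h1, h2⟩ := hp
    have : (g, p.2) = p := by rw [← h2]
    rwa [this]
  · intro p hp q hq hpq
    simp only [Finset.mem_filter, Set.mem_toFinset] at hp hq
    exact Prod.ext (hp.2.trans hq.2.symm) hpq
  · intro h hh
    simp only [Set.mem_toFinset, Set.mem_setOf_eq] at hh
    exact ⟨(g, h), by simp [hh], rfl⟩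

end FiberSum

section DistCor

variable {β : Type*} (T : SimpleGraph β) (F : ℕ → β) {n : ℕ}

theorem SP_dist_same (hT : T.Connected) (g : Fin n) (a b : β) :
    (SP T F n).dist (g, a) (g, b) = T.dist a b := by
  rw [SP_dist_pair T F hT, DDn_same]

theorem SP_dist_below (hT : T.Connected) {gs g : Fin n} (h : gs.val < g.val) (c a : β) :
    (SP T F n).dist (gs, c) (g, a)
      = chain T F (g.val - gs.val - 1) gs.val c (F g.val) + 1 + T.dist (F (g.val - 1)) a := by
  rw [SP_dist_pair T F hT, DDn_lt T F (le_of_lt h)]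
  have hk : g.val - gs.val = (g.val - gs.val - 1) + 1 := by omega
  rw [hk, chain_top]
  rw [(by omega : gs.val + (g.val - gs.val - 1) + 1 = g.val),
    (by omega : gs.val + (g.val - gs.val - 1) = g.val - 1),
    (by omega : g.val - gs.val - 1 + 1 - 1 = g.val - gs.val - 1)]

theorem SP_dist_above (hT : T.Connected) {gs g : Fin n} (h : g.val < gs.val) (c a : β) :
    (SP T F n).dist (gs, c) (g, a)
      = T.dist a (F (g.val + 1)) + 1 + chain T F (gs.val - g.val - 1) (g.val + 1) (F g.val) c := by
  rw [SimpleGraph.dist_comm, SP_dist_pair T F hT, DDn_lt T F (le_of_lt h)]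
  have hk : gs.val - g.val = (gs.val - g.val - 1) + 1 := by omega
  rw [hk, chain_succ, (by omega : gs.val - g.val - 1 + 1 - 1 = gs.val - g.val - 1)]

theorem SP_connected (hT : T.Connected) (hn : 0 < n) : (SP T F n).Connected := by
  have hbeta : Nonempty β := hT.nonempty
  rw [SimpleGraph.connected_iff]
  refine ⟨?_, by exact ⟨((⟨0, hn⟩ : Fin n), Classical.arbitrary β)⟩⟩
  intro u v
  rcases le_or_gt u.1.val v.1.val with hle | hlt
  · obtain ⟨w, -⟩ := exists_walk_chain T F hT _ u.1 v.1 u.2 v.2 hle rfl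
    have := SimpleGraph.Walk.reachable w
    simpa using this
  · obtain ⟨w, -⟩ := exists_walk_chain T F hT _ v.1 u.1 v.2 u.2 (by omega) rfl
    have := (SimpleGraph.Walk.reachable w).symm
    simpa using this

end DistCor

section LowerBound

variable {β : Type*} [Fintype β] (T : SimpleGraph β) (F : ℕ → β) {n : ℕ}

/-- the set of "gate" vertices of copy `g` -/
def gateSet (g : ℕ) (n : ℕ) : Set β :=
  (if 0 < g then {F (g - 1)} else ∅) ∪ (if g < n - 1 then {F (g + 1)} else ∅)

theorem gateSet_ncard (g : ℕ) : (gateSet F g n).ncard ≤ 2 := by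
  unfold gateSet
  apply le_trans (Set.ncard_union_le _ _)
  have h1 : (if 0 < g then ({F (g - 1)} : Set β) else ∅).ncard ≤ 1 := by
    split <;> simp
  have h2 : (if g < n - 1 then ({F (g + 1)} : Set β) else ∅).ncard ≤ 1 := by
    split <;> simp
  omega

theorem gateSet_ncard_end {g : ℕ} (h : g = 0 ∨ g = n - 1) (hn : 2 ≤ n) :
    (gateSet F g n).ncard ≤ 1 := by
  unfold gateSet
  rcases h with h | h <;> subst h
  · rw [if_neg (by omega), if_pos (by omega)]
    simp
  · rw [if_pos (by omega), if_neg (by omega)]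
    simp

theorem fiber_resolving (hT : T.Connected) (hn : 2 ≤ n)
    {R : Set (Fin n × β)} (hR : IsResolvingSet (SP T F n) R) (g : Fin n) :
    IsResolvingSet T ({h : β | (g, h) ∈ R} ∪ gateSet F g.val n) := by
  intro a b hab
  have key : ∀ s ∈ R, (SP T F n).dist (g, a) s = (SP T F n).dist (g, b) s := by
    rintro ⟨gs, c⟩ hs
    rcases lt_trichotomy gs.val g.val with hlt | heq | hgt
    · rw [SimpleGraph.dist_comm (u := (g, a)), SimpleGraph.dist_comm (u := (g, b)),
        SP_dist_below T F hT hlt, SP_dist_below T F hT hlt]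
      have hmem : F (g.val - 1) ∈ {h : β | (g, h) ∈ R} ∪ gateSet F g.val n := by
        right; left; rw [if_pos (by omega)]; rfl
      have := hab _ hmem
      rw [SimpleGraph.dist_comm (u := a), SimpleGraph.dist_comm (u := b)] at this
      omega
    · have : gs = g := Fin.ext heq
      subst this
      rw [SP_dist_same T F hT, SP_dist_same T F hT]
      exact hab c (Or.inl hs)
    · rw [SimpleGraph.dist_comm (u := (g, a)), SimpleGraph.dist_comm (u := (g, b)),
        SP_dist_above T F hT hgt, SP_dist_above T F hT hgt]
      have hmem : F (g.val + 1) ∈ {h : β | (g, h) ∈ R} ∪ gateSet F g.val n := by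
        right; right; rw [if_pos (by have := gs.isLt; omega)]; rfl
      have := hab _ hmem
      omega
  have := hR (g, a) (g, b) key
  exact (Prod.mk.injEq _ _ _ _).mp this |>.2

theorem lower_bound (hT : T.Connected) (hn : 2 ≤ n) {e : ℕ}
    (hd : metricDim T = e + 2)
    {R : Set (Fin n × β)} (hR : IsResolvingSet (SP T F n) R) :
    n * e + 2 ≤ R.ncard := by
  classical
  have fib_ge : ∀ g : Fin n, e + (if g.val = 0 then 1 else 0) + (if g.val = n - 1 then 1 else 0)
      ≤ ({h : β | (g, h) ∈ R}).ncard := by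
    intro g
    have hres := fiber_resolving T F hT hn hR g
    have h1 : metricDim T ≤ ({h : β | (g, h) ∈ R} ∪ gateSet F g.val n).ncard :=
      metricDim_le_of_resolving T hres
    have h2 : ({h : β | (g, h) ∈ R} ∪ gateSet F g.val n).ncard
        ≤ ({h : β | (g, h) ∈ R}).ncard + (gateSet F g.val n).ncard :=
      Set.ncard_union_le _ _
    by_cases hg0 : g.val = 0
    · have h3 := gateSet_ncard_end F (Or.inl hg0) hn
      rw [if_pos hg0, if_neg (by omega)]
      omega
    · by_cases hgl : g.val = n - 1
      · have h3 := gateSet_ncard_end F (Or.inr hgl) hn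
        rw [if_neg hg0, if_pos hgl]
        omega
      · have h3 := gateSet_ncard F (n := n) g.val
        rw [if_neg hg0, if_neg hgl]
        omega
  rw [ncard_fiber_sum R]
  calc n * e + 2
      = ∑ g : Fin n, (e + (if g.val = 0 then 1 else 0) + (if g.val = n - 1 then 1 else 0)) := by
        rw [Finset.sum_add_distrib, Finset.sum_add_distrib, Finset.sum_const,
          Finset.card_univ, Fintype.card_fin, smul_eq_mul]
        have hs1 : ∑ g : Fin n, (if g.val = 0 then 1 else 0) = 1 := by
          have hrw : ∀ g : Fin n, (if g.val = 0 then 1 else 0)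
              = if g = (⟨0, by omega⟩ : Fin n) then 1 else 0 := by
            intro g; simp [Fin.ext_iff]
          rw [Finset.sum_congr rfl (fun g _ => hrw g), Finset.sum_ite_eq' Finset.univ]
          simp
        have hs2 : ∑ g : Fin n, (if g.val = n - 1 then 1 else 0) = 1 := by
          have hrw : ∀ g : Fin n, (if g.val = n - 1 then 1 else 0)
              = if g = (⟨n - 1, by omega⟩ : Fin n) then 1 else 0 := by
            intro g; simp [Fin.ext_iff]
          rw [Finset.sum_congr rfl (fun g _ => hrw g), Finset.sum_ite_eq' Finset.univ]
          simp
        rw [hs1, hs2]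
    _ ≤ ∑ g : Fin n, ({h : β | (g, h) ∈ R}).ncard := Finset.sum_le_sum (fun g _ => fib_ge g)

end LowerBound

section PathChar

variable {V : Type*} [Fintype V] (G : SimpleGraph V)

theorem exists_walk_getVert_le {u v : V} (p : G.Walk u v) (i : ℕ) :
    ∃ w : G.Walk u (p.getVert i), w.length ≤ i := by
  induction p generalizing i with
  | nil => exact ⟨SimpleGraph.Walk.nil, by simp⟩
  | @cons x y z h q IH =>
      cases i with
      | zero => exact ⟨SimpleGraph.Walk.nil, Nat.le_refl _⟩
      | succ i =>
          obtain ⟨w, hw⟩ := IH i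
          exact ⟨SimpleGraph.Walk.cons h w, by simp; omega⟩

theorem dist_getVert_le {u v : V} (p : G.Walk u v) (i : ℕ) :
    G.dist u (p.getVert i) ≤ i := by
  obtain ⟨w, hw⟩ := exists_walk_getVert_le G p i
  exact le_trans (SimpleGraph.dist_le w) hw

theorem exists_adj_dist_pred (hG : G.Connected) {w v : V} {k : ℕ}
    (h : G.dist w v = k + 1) : ∃ u, G.Adj u v ∧ G.dist w u = k := by
  obtain ⟨p, hp⟩ := (hG w v).exists_walk_length_eq_dist
  rw [h] at hp
  refine ⟨p.getVert k, ?_, ?_⟩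
  · have hadj := p.adj_getVert_succ (i := k) (by omega)
    have hv : p.getVert (k + 1) = v := by
      rw [← hp]
      exact p.getVert_length
    rwa [hv] at hadj
  · have hle := dist_getVert_le G p k
    have hadj := p.adj_getVert_succ (i := k) (by omega)
    have hv : p.getVert (k + 1) = v := by
      rw [← hp]; exact p.getVert_length
    rw [hv] at hadj
    have h1 : G.dist (p.getVert k) v ≤ 1 :=
      SimpleGraph.dist_le (SimpleGraph.Walk.cons hadj SimpleGraph.Walk.nil)
    have h2 : G.dist w v ≤ G.dist w (p.getVert k) + G.dist (p.getVert k) v :=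
      hG.dist_triangle
    omega

theorem exists_dist_eq_level (hG : G.Connected) (w : V) :
    ∀ (k : ℕ) (v : V), G.dist w v = k → ∀ j ≤ k, ∃ u, G.dist w u = j := by
  intro k
  induction k with
  | zero =>
      intro v hv j hj
      exact ⟨v, by omega⟩
  | succ k IH =>
      intro v hv j hj
      rcases eq_or_lt_of_le hj with heq | hlt
      · exact ⟨v, by omega⟩
      · obtain ⟨u, -, hu⟩ := exists_adj_dist_pred G hG hv
        exact IH u hu j (by omega)

theorem isPathGraph_of_dim_le_one (hG : G.Connected) (h : metricDim G ≤ 1) :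
    IsPathGraph G := by
  classical
  obtain ⟨S, hcard, hres⟩ := exists_min_resolving G hG
  rcases Nat.le_one_iff_eq_zero_or_eq_one.mp (hcard ▸ h : S.ncard ≤ 1) with h0 | h1
  · -- empty resolving set: subsingleton
    have hS : S = ∅ := (Set.ncard_eq_zero S.toFinite).mp h0
    have hsub : ∀ u v : V, u = v := by
      intro u v
      exact hres u v (by simp [hS])
    have hne : Nonempty V := hG.nonempty
    obtain ⟨v₀⟩ := hne
    have hcard1 : Fintype.card V = 1 := by
      rw [Fintype.card_eq_one_iff]
      exact ⟨v₀, fun y => hsub y v₀⟩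
    refine ⟨1, ⟨⟨Fintype.equivFinOfCardEq hcard1, ?_⟩⟩⟩
    intro a b
    constructor
    · intro hadj
      rw [pathGraph_adj] at hadj
      have ha := ((Fintype.equivFinOfCardEq hcard1) a).isLt
      have hb := ((Fintype.equivFinOfCardEq hcard1) b).isLt
      omega
    · intro hadj
      exact absurd (hsub a b) hadj.ne
  · obtain ⟨w, hw⟩ := Set.ncard_eq_one.mp h1
    subst hw
    set φ : V → ℕ := fun v => G.dist w v with hφ
    have φinj : Function.Injective φ := by
      intro a b hab
      apply hres a b
      intro s hs
      rw [Set.mem_singleton_iff] at hs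
      subst hs
      rw [SimpleGraph.dist_comm (u := a), SimpleGraph.dist_comm (u := b)]
      exact hab
    set m := Fintype.card V with hm
    have hlt : ∀ v, φ v < m := by
      intro v
      by_contra hge
      push_neg at hge
      have hlev : ∀ j : Fin (φ v + 1), ∃ u, φ u = j.val := by
        intro j
        exact exists_dist_eq_level G hG w (φ v) v rfl j.val (by omega)
      choose ψ hψ using hlev
      have hψinj : Function.Injective ψ := by
        intro i j hij
        apply Fin.ext
        rw [← hψ i, ← hψ j, hij]
      have := Fintype.card_le_of_injective ψ hψinj
      simp only [Fintype.card_fin] at this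
      omega
    have hbij : Function.Bijective (fun v => (⟨φ v, hlt v⟩ : Fin m)) := by
      rw [Fintype.bijective_iff_injective_and_card]
      refine ⟨?_, by simp [hm]⟩
      intro a b hab
      apply φinj
      exact congrArg Fin.val hab
    refine ⟨m, ⟨⟨Equiv.ofBijective _ hbij, ?_⟩⟩⟩
    intro a b
    simp only [Equiv.ofBijective_apply, pathGraph_adj]
    constructor
    · rintro (hab | hab)
      · -- φ a + 1 = φ b
        obtain ⟨u, hadj, hu⟩ := exists_adj_dist_pred G hG (k := φ a) (v := b) hab.symm
        have : u = a := φinj hu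
        rwa [this] at hadj
      · obtain ⟨u, hadj, hu⟩ := exists_adj_dist_pred G hG (k := φ b) (v := a) hab.symm
        have : u = b := φinj hu
        rw [this] at hadj
        exact hadj.symm
    · intro hadj
      have hne : φ a ≠ φ b := fun hc => hadj.ne (φinj hc)
      have h1 : G.dist a b = 1 := SimpleGraph.dist_eq_one_iff_adj.mpr hadj
      have t1 : G.dist w b ≤ G.dist w a + G.dist a b := hG.dist_triangle
      have t2 : G.dist w a ≤ G.dist w b + G.dist b a := hG.dist_triangle
      rw [SimpleGraph.dist_comm (u := b)] at t2
      show φ a + 1 = φ b ∨ φ b + 1 = φ a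
      simp only [hφ] at *
      omega

end PathChar

section UpperBound

variable {β : Type*} (T : SimpleGraph β) (x y z : β) {n : ℕ}

/-- The period-4 gate pattern. -/
def Fc : ℕ → β := fun k => if k % 4 < 2 then x else y

theorem Fc_mem (k : ℕ) : Fc x y k = x ∨ Fc x y k = y := by
  unfold Fc; split <;> simp

theorem Fc_one : Fc x y 1 = x := by simp [Fc]

theorem Fc_pair (k : ℕ) :
    (Fc x y k = x ∧ Fc x y (k+2) = y) ∨ (Fc x y k = y ∧ Fc x y (k+2) = x) := by
  by_cases h : k % 4 < 2
  · left
    constructor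
    · simp [Fc, h]
    · have h2 : ¬ ((k+2) % 4 < 2) := by omega
      simp [Fc, h2]
  · right
    constructor
    · simp [Fc, h]
    · have h2 : (k+2) % 4 < 2 := by omega
      simp [Fc, h2]

/-- lower gate of copy `g` (as seen from the base landmark) -/
def xt (g : ℕ) : β := if g = 0 then y else Fc x y (g-1)

/-- upper gate of copy `g` (as seen from the top landmark) -/
def yt (g : ℕ) : β := if g = n-1 then z else Fc x y (g+1)

/-- distance between the two gates of copy `g` -/
noncomputable def tg (g : ℕ) : ℕ := T.dist (xt x y g) (yt (n := n) x y z g)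

/-- distance from base landmark to the lower gate of copy `g` -/
noncomputable def Pp : ℕ → ℕ :=
  fun g => Nat.rec 0 (fun k ih => ih + tg T x y z (n := n) k + 1) g

theorem Pp_succ (g : ℕ) :
    Pp T x y z (n := n) (g+1) = Pp T x y z (n := n) g + tg T x y z (n := n) g + 1 := rfl

/-- distance from the upper gate of copy `g` to the top landmark -/
noncomputable def Qq (g : ℕ) : ℕ :=
  if g = n-1 then 0 else chain T (Fc x y) (n-2-g) (g+1) (Fc x y g) z + 1

theorem Pp_mono {g g' : ℕ} (h : g ≤ g') : Pp T x y z (n := n) g ≤ Pp T x y z (n := n) g' := by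
  induction g' with
  | zero => simp at h; simp [h]
  | succ k IH =>
      rcases Nat.lt_succ_iff_lt_or_eq.mp (Nat.lt_succ_of_le h) with h2 | h2
      · have := IH (by omega)
        rw [Pp_succ]
        omega
      · subst h2; rfl

theorem Pp_eq_chain (hn : 2 ≤ n) : ∀ g, 1 ≤ g → g ≤ n-1 →
    Pp T x y z (n := n) g = chain T (Fc x y) (g-1) 0 y (Fc x y g) + 1 := by
  intro g
  induction g with
  | zero => omega
  | succ g IH =>
      intro h1 h2
      by_cases hg0 : g = 0
      · subst hg0
        show Pp T x y z (n := n) 1 = chain T (Fc x y) 0 0 y (Fc x y 1) + 1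
        rw [Pp_succ, chain_zero]
        show 0 + tg T x y z (n := n) 0 + 1 = _
        unfold tg xt yt
        rw [if_pos rfl, if_neg (by omega)]
        norm_num
      · have hIH := IH (by omega) (by omega)
        rw [Pp_succ, hIH]
        have htop := chain_top T (Fc x y) (g-1) 0 y (Fc x y (g+1))
        rw [(by omega : 0 + (g-1) + 1 = g), (by omega : 0 + (g-1) = g-1),
          (by omega : (g-1) + 1 = g)] at htop
        rw [(by omega : g + 1 - 1 = g), htop]
        unfold tg xt yt
        rw [if_neg hg0, if_neg (by omega : g ≠ n-1)]

theorem p_form (hT : T.Connected) (hn : 2 ≤ n) (g : Fin n) (a : β) :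
    (SP T (Fc x y) n).dist (g, a) ((⟨0, by omega⟩ : Fin n), y)
      = Pp T x y z (n := n) g.val + T.dist (xt x y g.val) a := by
  by_cases hg0 : g.val = 0
  · rw [show ((⟨0, by omega⟩ : Fin n)) = g from (Fin.ext hg0).symm,
      SP_dist_same T (Fc x y) hT, hg0]
    show T.dist a y = Pp T x y z (n := n) 0 + T.dist (xt x y 0) a
    unfold xt
    rw [if_pos rfl]
    show T.dist a y = 0 + T.dist y a
    rw [SimpleGraph.dist_comm]
    omega
  · rw [SimpleGraph.dist_comm,
      SP_dist_below T (Fc x y) hT (gs := ⟨0, by omega⟩) (g := g) (by simpa using Nat.pos_of_ne_zero hg0)]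
    rw [Pp_eq_chain T x y z hn g.val (by omega) (by have := g.isLt; omega)]
    unfold xt
    rw [if_neg hg0]
    simp only [Fin.val_mk, Nat.sub_zero]

theorem q_form (hT : T.Connected) (hn : 2 ≤ n) (g : Fin n) (a : β) :
    (SP T (Fc x y) n).dist (g, a) ((⟨n-1, by omega⟩ : Fin n), z)
      = T.dist a (yt (n := n) x y z g.val) + Qq T x y z (n := n) g.val := by
  by_cases hgl : g.val = n-1
  · rw [show ((⟨n-1, by omega⟩ : Fin n)) = g from (Fin.ext hgl).symm,
      SP_dist_same T (Fc x y) hT, hgl]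
    unfold yt Qq
    rw [if_pos rfl, if_pos rfl]
    omega
  · rw [SimpleGraph.dist_comm,
      SP_dist_above T (Fc x y) hT (gs := ⟨n-1, by omega⟩) (g := g)
        (by simp only [Fin.val_mk]; have := g.isLt; omega)]
    unfold yt Qq
    rw [if_neg hgl, if_neg hgl]
    simp only [Fin.val_mk]
    rw [(by have := g.isLt; omega : n - 1 - g.val - 1 = n - 2 - g.val)]
    omega

end UpperBound

section UpperBound2

variable {β : Type*} (T : SimpleGraph β) (x y z : β) {n : ℕ}

theorem S_step (hn : 2 ≤ n) {g : ℕ} (hg : g < n-1) :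
    Qq T x y z (n := n) g = 1 + tg T x y z (n := n) (g+1) + Qq T x y z (n := n) (g+1) := by
  unfold Qq
  rw [if_neg (by omega)]
  by_cases hgl : g + 1 = n-1
  · rw [if_pos hgl]
    rw [(by omega : n-2-g = 0), chain_zero]
    unfold tg xt yt
    rw [if_neg (by omega), if_pos hgl, (by omega : g+1-1 = g)]
    omega
  · rw [if_neg hgl]
    rw [(by omega : n-2-g = (n-2-(g+1)) + 1), chain_succ]
    unfold tg xt yt
    rw [if_neg (by omega), if_neg hgl, (by omega : g+1-1 = g)]
    omega

theorem S_const (hn : 2 ≤ n) :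
    ∀ g, g ≤ n-1 → Pp T x y z (n := n) g + tg T x y z (n := n) g + Qq T x y z (n := n) g
      = Pp T x y z (n := n) (n-1) + tg T x y z (n := n) (n-1) := by
  have key : ∀ k, k ≤ n-1 →
      Pp T x y z (n := n) (n-1-k) + tg T x y z (n := n) (n-1-k) + Qq T x y z (n := n) (n-1-k)
        = Pp T x y z (n := n) (n-1) + tg T x y z (n := n) (n-1) := by
    intro k
    induction k with
    | zero =>
        intro _
        simp only [Nat.sub_zero]
        unfold Qq
        rw [if_pos rfl]
        omega
    | succ k IH =>
        intro hk
        have hlt : n-1-(k+1) < n-1 := by omega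
        have hstep := S_step T x y z hn (g := n-1-(k+1)) hlt
        have hPp := Pp_succ T x y z (n := n) (n-1-(k+1))
        rw [(by omega : n-1-(k+1)+1 = n-1-k)] at hstep hPp
        have := IH (by omega)
        omega
  intro g hg
  have := key (n-1-g) (by omega)
  rwa [(by omega : n-1-(n-1-g) = g)] at this

theorem cross_impossible (hT : T.Connected) (hn : 2 ≤ n) (g g' : Fin n) (a b : β)
    (hgg : g.val < g'.val)
    (hp : (SP T (Fc x y) n).dist (g, a) ((⟨0, by omega⟩ : Fin n), y)
        = (SP T (Fc x y) n).dist (g', b) ((⟨0, by omega⟩ : Fin n), y))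
    (hq : (SP T (Fc x y) n).dist (g, a) ((⟨n-1, by omega⟩ : Fin n), z)
        = (SP T (Fc x y) n).dist (g', b) ((⟨n-1, by omega⟩ : Fin n), z)) :
    False := by
  rw [p_form T x y z hT hn g a, p_form T x y z hT hn g' b] at hp
  rw [q_form T x y z hT hn g a, q_form T x y z hT hn g' b] at hq
  have htri1 : T.dist (xt x y g.val) a
      ≤ T.dist a (yt (n := n) x y z g.val) + tg T x y z (n := n) g.val := by
    have h1 : T.dist (xt x y g.val) a ≤ T.dist (xt x y g.val) (yt (n := n) x y z g.val)
        + T.dist (yt (n := n) x y z g.val) a := hT.dist_triangle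
    rw [SimpleGraph.dist_comm (u := yt (n := n) x y z g.val)] at h1
    unfold tg
    omega
  have htri2 : T.dist b (yt (n := n) x y z g'.val)
      ≤ T.dist (xt x y g'.val) b + tg T x y z (n := n) g'.val := by
    have h1 : T.dist b (yt (n := n) x y z g'.val) ≤ T.dist b (xt x y g'.val)
        + T.dist (xt x y g'.val) (yt (n := n) x y z g'.val) := hT.dist_triangle
    rw [SimpleGraph.dist_comm (u := b) (v := xt x y g'.val)] at h1
    unfold tg
    omega
  have hS1 := S_const T x y z hn g.val (by have := g.isLt; omega)
  have hS2 := S_const T x y z hn g'.val (by have := g'.isLt; omega)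
  have hmono : Pp T x y z (n := n) g.val + tg T x y z (n := n) g.val + 1
      ≤ Pp T x y z (n := n) g'.val := by
    have h1 := Pp_succ T x y z (n := n) g.val
    have h2 := Pp_mono T x y z (n := n) (g := g.val + 1) (g' := g'.val) (by omega)
    omega
  omega

end UpperBound2

section UpperBound3

variable {β : Type*} [Fintype β] (T : SimpleGraph β) (W : Set β) (x y z : β) {n : ℕ}

/-- the non-gate part of the resolving set of `T` -/
def Abset : Set β := W \ {x, y}

/-- the fiber of the product resolving set over copy `g` -/
def fibSet (g : ℕ) (n : ℕ) : Set β :=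
  if g = 0 then Abset W x y ∪ {y} else if g = n-1 then Abset W x y ∪ {z} else Abset W x y

/-- the resolving set of the product -/
def Rset : Set (Fin n × β) := {p | p.2 ∈ fibSet W x y z p.1.val n}

theorem Abset_sub_fibSet (g : ℕ) : Abset W x y ⊆ fibSet W x y z g n := by
  unfold fibSet
  split
  · exact Set.subset_union_left
  · split
    · exact Set.subset_union_left
    · exact subset_rfl

theorem s0_mem (hn : 2 ≤ n) : (((⟨0, by omega⟩ : Fin n), y) : Fin n × β) ∈ Rset W x y z := by
  show y ∈ fibSet W x y z (0 : ℕ) n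
  unfold fibSet
  rw [if_pos rfl]
  right; rfl

theorem s1_mem (hn : 2 ≤ n) : (((⟨n-1, by omega⟩ : Fin n), z) : Fin n × β) ∈ Rset W x y z := by
  show z ∈ fibSet W x y z (n-1) n
  unfold fibSet
  rw [if_neg (by omega), if_pos rfl]
  right; rfl

theorem gates_cover (hn : 2 ≤ n) (hxy : x ≠ y)
    (hz : (Fc x y (n-2) = x ∧ z = y) ∨ (Fc x y (n-2) = y ∧ z = x))
    (g : Fin n) (s : β) (hs : s = x ∨ s = y) :
    s = xt x y g.val ∨ s = yt (n := n) x y z g.val := by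
  by_cases hg0 : g.val = 0
  · unfold xt yt
    rw [hg0, if_pos rfl, if_neg (by omega), Fc_one]
    tauto
  · by_cases hgl : g.val = n-1
    · unfold xt yt
      rw [hgl, if_neg (by omega), if_pos rfl, (by omega : n-1-1 = n-2)]
      rcases hz with ⟨h1, h2⟩ | ⟨h1, h2⟩ <;> rw [h1, h2] <;> tauto
    · unfold xt yt
      rw [if_neg hg0, if_neg hgl]
      have := Fc_pair x y (g.val - 1)
      rw [(by omega : g.val - 1 + 2 = g.val + 1)] at this
      rcases this with ⟨h1, h2⟩ | ⟨h1, h2⟩ <;> rw [h1, h2] <;> tauto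

theorem Rset_resolving (hT : T.Connected) (hn : 2 ≤ n) (hW : IsResolvingSet T W)
    (hxy : x ≠ y)
    (hz : (Fc x y (n-2) = x ∧ z = y) ∨ (Fc x y (n-2) = y ∧ z = x)) :
    IsResolvingSet (SP T (Fc x y) n) (Rset W x y z) := by
  rintro ⟨g, a⟩ ⟨g', b⟩ hd
  have hp := hd _ (s0_mem W x y z hn)
  have hq := hd _ (s1_mem W x y z hn)
  rcases lt_trichotomy g.val g'.val with hlt | heq | hgt
  · exact absurd hq (by
      intro hq
      exact cross_impossible T x y z hT hn g g' a b hlt hp hq)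
  · have hgg : g = g' := Fin.ext heq
    subst hgg
    have hab : a = b := by
      apply hW a b
      intro s hsW
      by_cases hsxy : s = x ∨ s = y
      · rcases gates_cover x y z hn hxy hz g s hsxy with hsx | hsy
        · rw [p_form T x y z hT hn g a, p_form T x y z hT hn g b] at hp
          rw [hsx, SimpleGraph.dist_comm (u := a), SimpleGraph.dist_comm (u := b)]
          omega
        · rw [q_form T x y z hT hn g a, q_form T x y z hT hn g b] at hq
          rw [hsy]
          omega
      · push_neg at hsxy
        have hsA : s ∈ Abset W x y := ⟨hsW, by simp [hsxy.1, hsxy.2]⟩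
        have hmem : ((g, s) : Fin n × β) ∈ Rset W x y z := Abset_sub_fibSet W x y z g.val hsA
        have := hd _ hmem
        rw [SP_dist_same T (Fc x y) hT, SP_dist_same T (Fc x y) hT] at this
        exact this
    rw [hab]
  · exact absurd hq.symm (by
      intro hq
      exact cross_impossible T x y z hT hn g' g b a hgt hp.symm hq)

end UpperBound3

section UpperBound4

variable {β : Type*} [Fintype β] (W : Set β) (x y z : β) {n : ℕ}

theorem Abset_ncard {e : ℕ} (hW2 : W.ncard = e + 2) (hxW : x ∈ W) (hyW : y ∈ W)
    (hxy : x ≠ y) : (Abset W x y).ncard = e := by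
  unfold Abset
  rw [Set.ncard_diff (by
    intro s hs
    rcases hs with h | h
    · rw [h]; exact hxW
    · rw [Set.mem_singleton_iff] at h; rw [h]; exact hyW)]
  rw [hW2, Set.ncard_pair hxy]
  omega

theorem fibSet_ncard {e : ℕ} (hn : 2 ≤ n) (hW2 : W.ncard = e + 2) (hxW : x ∈ W) (hyW : y ∈ W)
    (hxy : x ≠ y) (hzxy : z = x ∨ z = y) (g : ℕ) :
    (fibSet W x y z g n).ncard
      = e + (if g = 0 then 1 else 0) + (if g = n-1 then 1 else 0) := by
  have hA := Abset_ncard W x y hW2 hxW hyW hxy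
  have hyA : y ∉ Abset W x y := by
    unfold Abset; simp
  have hzA : z ∉ Abset W x y := by
    unfold Abset
    rcases hzxy with h | h <;> simp [h]
  unfold fibSet
  by_cases hg0 : g = 0
  · rw [if_pos hg0, if_pos hg0, if_neg (by omega)]
    rw [Set.union_singleton, Set.ncard_insert_of_notMem hyA]
    omega
  · rw [if_neg hg0, if_neg hg0]
    by_cases hgl : g = n-1
    · rw [if_pos hgl, if_pos hgl]
      rw [Set.union_singleton, Set.ncard_insert_of_notMem hzA]
      omega
    · rw [if_neg hgl, if_neg hgl]
      omega

theorem Rset_ncard {e : ℕ} (hn : 2 ≤ n) (hW2 : W.ncard = e + 2) (hxW : x ∈ W) (hyW : y ∈ W)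
    (hxy : x ≠ y) (hzxy : z = x ∨ z = y) :
    (Rset W x y z (n := n)).ncard = n * e + 2 := by
  classical
  rw [ncard_fiber_sum (Rset W x y z)]
  have hfib : ∀ g : Fin n, {h : β | (g, h) ∈ Rset W x y z} = fibSet W x y z g.val n := by
    intro g
    rfl
  calc ∑ g : Fin n, ({h : β | (g, h) ∈ Rset W x y z}).ncard
      = ∑ g : Fin n, (e + (if g.val = 0 then 1 else 0) + (if g.val = n-1 then 1 else 0)) := by
        apply Finset.sum_congr rfl
        intro g _
        rw [hfib g, fibSet_ncard W x y z hn hW2 hxW hyW hxy hzxy g.val]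
    _ = n * e + 2 := by
        rw [Finset.sum_add_distrib, Finset.sum_add_distrib, Finset.sum_const,
          Finset.card_univ, Fintype.card_fin, smul_eq_mul]
        have hs1 : ∑ g : Fin n, (if g.val = 0 then 1 else 0) = 1 := by
          have hrw : ∀ g : Fin n, (if g.val = 0 then 1 else 0)
              = if g = (⟨0, by omega⟩ : Fin n) then 1 else 0 := by
            intro g; simp [Fin.ext_iff]
          rw [Finset.sum_congr rfl (fun g _ => hrw g), Finset.sum_ite_eq' Finset.univ]
          simp
        have hs2 : ∑ g : Fin n, (if g.val = n - 1 then 1 else 0) = 1 := by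
          have hrw : ∀ g : Fin n, (if g.val = n - 1 then 1 else 0)
              = if g = (⟨n - 1, by omega⟩ : Fin n) then 1 else 0 := by
            intro g; simp [Fin.ext_iff]
          rw [Finset.sum_congr rfl (fun g _ => hrw g), Finset.sum_ite_eq' Finset.univ]
          simp
        rw [hs1, hs2]

end UpperBound4

theorem sierpinski_metric_dim_path_tree {β : Type*} [Fintype β] (n : ℕ) (hn : 2 ≤ n)
    (T₂ : SimpleGraph β) (h2 : T₂.IsTree) (hnp : ¬ IsPathGraph T₂) :
    sInf {k | ∃ f : Fin n → β, metricDim (sierpinskiProd (pathGraph n) T₂ f) = k} =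
      n * (metricDim T₂ - 2) + 2 := by
  classical
  have hT : T₂.Connected := h2.isConnected
  have hd2 : 2 ≤ metricDim T₂ := by
    by_contra h
    push_neg at h
    exact hnp (isPathGraph_of_dim_le_one T₂ hT (by omega))
  obtain ⟨e, he⟩ : ∃ e, metricDim T₂ = e + 2 := ⟨metricDim T₂ - 2, by omega⟩
  obtain ⟨W, hWcard, hWres⟩ := exists_min_resolving T₂ hT
  rw [he] at hWcard
  obtain ⟨x, y, hxW, hyW, hxy⟩ := (Set.one_lt_ncard_iff W.toFinite).mp (by omega)
  set z := if Fc x y (n-2) = x then y else x with hzdef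
  have hz : (Fc x y (n-2) = x ∧ z = y) ∨ (Fc x y (n-2) = y ∧ z = x) := by
    rcases Fc_mem x y (n-2) with h | h
    · left
      exact ⟨h, by rw [hzdef, if_pos h]⟩
    · right
      refine ⟨h, ?_⟩
      rw [hzdef, if_neg (by rw [h]; exact hxy.symm)]
  have hzxy : z = x ∨ z = y := by
    rw [hzdef]; split
    · right; rfl
    · left; rfl
  have hupper : metricDim (SP T₂ (Fc x y) n) ≤ n * e + 2 := by
    have h1 := metricDim_le_of_resolving _
      (Rset_resolving T₂ W x y z hT hn hWres hxy hz)
    rwa [Rset_ncard W x y z hn hWcard hxW hyW hxy hzxy] at h1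
  have hlow : ∀ f : Fin n → β,
      n * e + 2 ≤ metricDim (sierpinskiProd (pathGraph n) T₂ f) := by
    intro f
    have hgraph : sierpinskiProd (pathGraph n) T₂ f
        = SP T₂ (fun k : ℕ => f ⟨k % n, Nat.mod_lt _ (by omega)⟩) n := by
      unfold SP
      congr 1
      funext i
      show f i = f ⟨i.val % n, _⟩
      congr 1
      apply Fin.ext
      simp [Nat.mod_eq_of_lt i.isLt]
    rw [hgraph]
    have hpos : 0 < n := by omega
    obtain ⟨R, hRcard, hRres⟩ :=
      exists_min_resolving (SP T₂ (fun k : ℕ => f ⟨k % n, Nat.mod_lt _ (by omega)⟩) n)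
        (SP_connected T₂ (fun k : ℕ => f ⟨k % n, Nat.mod_lt _ (by omega)⟩) hT hpos)
    rw [← hRcard]
    exact lower_bound T₂ _ hT hn he hRres
  have hmem : metricDim (SP T₂ (Fc x y) n)
      ∈ {k | ∃ f : Fin n → β, metricDim (sierpinskiProd (pathGraph n) T₂ f) = k} :=
    ⟨fun i => Fc x y i.val, rfl⟩
  have hval : metricDim (SP T₂ (Fc x y) n) = n * e + 2 :=
    le_antisymm hupper (hlow (fun i => Fc x y i.val))
  have hgoal : n * (metricDim T₂ - 2) + 2 = n * e + 2 := by
    rw [he, Nat.add_sub_cancel]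
  rw [hgoal]
  apply le_antisymm
  · exact le_trans (Nat.sInf_le hmem) (le_of_eq hval)
  · apply le_csInf ⟨_, hmem⟩
    rintro k ⟨f, rfl⟩
    exact hlow f
end

section
/- Let T₁ be a tree, T₂ a tree that is not a path, and f : V(T₁) → V(T₂) arbitrary. For each vertex v of T₁, let C_v denote the set of connecting vertices in the copy vT₂ of T₂ in T₁ ⊗_f T₂. Then |C_v| ≤ deg_{T₁}(v), and for any resolving set B of T₁ ⊗_f T₂, the set (B ∩ V(vT₂)) ∪ C_v is a resolving set of the tree vT₂. -/
open SimpleGraph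

section Aux

variable {α β : Type*} {G : SimpleGraph α} {H : SimpleGraph β} {f : α → β}

/-- Lift a walk of `H` to the copy `aH` of `H` inside the Sierpiński product. -/
def liftWalk (G : SimpleGraph α) (H : SimpleGraph β) (f : α → β) (a : α) :
    {x y : β} → H.Walk x y → (sierpinskiProd G H f).Walk (a, x) (a, y)
  | _, _, .nil => .nil
  | _, _, @Walk.cons _ _ x m y h p =>
      Walk.cons (u := (a, x)) (v := (a, m)) (Or.inl ⟨rfl, h⟩) (liftWalk G H f a p)

lemma liftWalk_length (a : α) {x y : β} (p : H.Walk x y) :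
    (liftWalk G H f a p).length = p.length := by
  induction p with
  | nil => simp [liftWalk]
  | cons h p ih => show (liftWalk G H f a p).length + 1 = p.length + 1; rw [ih]

lemma sierpinskiProd_reach (hH : H.Connected) {a b : α} (w : G.Walk a b) (x y : β) :
    (sierpinskiProd G H f).Reachable (a, x) (b, y) := by
  induction w generalizing x with
  | nil => exact ((hH x y).elim fun q => ⟨liftWalk G H f _ q⟩)
  | @cons a c b h p ih =>
      have r1 : (sierpinskiProd G H f).Reachable (a, x) (a, f c) :=
        ((hH x (f c)).elim fun q => ⟨liftWalk G H f _ q⟩)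
      have r2 : (sierpinskiProd G H f).Adj (a, f c) (c, f a) := Or.inr ⟨h, rfl, rfl⟩
      exact (r1.trans r2.reachable).trans (ih (f a))

lemma sierpinskiProd_connected (hG : G.Connected) (hH : H.Connected) :
    (sierpinskiProd G H f).Connected := by
  have : Nonempty (α × β) := ⟨(hG.nonempty.some, hH.nonempty.some)⟩
  refine ⟨fun z w => ?_⟩
  exact (hG.preconnected z.1 w.1).elim fun p => by
    simpa using sierpinskiProd_reach (f := f) hH p z.2 w.2

/-- Key crossing lemma: a walk starting in the copy `vH` and ending outside of it
passes through a connecting vertex of the copy `vH`. -/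
lemma sierpinskiProd_crossing {v : α} :
    ∀ {z w : α × β} (p : (sierpinskiProd G H f).Walk z w), z.1 = v → w.1 ≠ v →
      ∃ g', G.Adj v g' ∧ (v, f g') ∈ p.support := by
  intro z w p
  induction p with
  | nil => intro h h'; exact absurd h h'
  | @cons a m b h p ih =>
      intro hz hw
      by_cases hm : m.1 = v
      · obtain ⟨g', hg, hmem⟩ := ih hm hw
        exact ⟨g', hg, by simp [Walk.support_cons, hmem]⟩
      · rcases h with ⟨he, -⟩ | ⟨hadj, hb, -⟩
        · exact absurd (by rw [← he]; exact hz) hm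
        · refine ⟨m.1, by rw [← hz]; exact hadj, ?_⟩
          have : (v, f m.1) = a := Prod.ext (hz.symm) (hb.symm)
          rw [this]
          exact Walk.start_mem_support _

/-- In the Sierpiński product of two trees, distances inside a copy of the second
tree agree with distances in that tree. -/
lemma sierpinskiProd_copy_dist (h1 : G.IsTree) (h2 : H.IsTree) (f : α → β) (v : α)
    (x y : β) : (sierpinskiProd G H f).dist (v, x) (v, y) = H.dist x y := by
  classical
  -- canonical paths from `v` in the tree `G`
  choose p hspec using h1.existsUnique_path v
  set step : α → α := fun a => (p a).getVert 1 with hstep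
  have hpre : ∀ {a b : α} (q : G.Walk v a) (r : G.Walk a b), 1 ≤ q.length →
      (q.append r).getVert 1 = q.getVert 1 := by
    intro a b q r hq
    rw [Walk.getVert_append]
    rcases lt_or_eq_of_le hq with hlt | heq
    · rw [if_pos hlt]
    · have hnot : ¬ 1 < q.length := by rw [← heq]; exact lt_irrefl 1
      rw [if_neg hnot]
      have h1' : r.getVert (1 - q.length) = a := by
        rw [← heq]; exact Walk.getVert_zero r
      have h2' : q.getVert 1 = a := by
        rw [heq]; exact Walk.getVert_length q
      rw [h1', h2']
  have hstepA : ∀ a, G.Adj v a → step a = a := by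
    intro a hadj
    have hpath : (Walk.cons hadj Walk.nil).IsPath := by
      rw [Walk.cons_isPath_iff]
      exact ⟨Walk.IsPath.nil, by simp [hadj.ne]⟩
    have := (hspec a).2 _ hpath
    rw [hstep]
    simp only [← this]
    rfl
  have hlen1 : ∀ {a : α}, a ≠ v → ∀ (q : G.Walk v a), 1 ≤ q.length := by
    intro a ha q
    by_contra hcon
    push_neg at hcon
    have h0 : q.length = 0 := by omega
    exact ha (Walk.eq_of_length_eq_zero h0).symm
  have hstepB : ∀ a a', G.Adj a a' → a ≠ v → a' ≠ v → step a = step a' := by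
    intro a a' hadj ha ha'
    by_cases hmem : a' ∈ (p a).support
    · have hq' : ((p a).takeUntil a' hmem).IsPath := (hspec a).1.takeUntil hmem
      have he : (p a).takeUntil a' hmem = p a' := (hspec a').2 _ hq'
      have : (p a).getVert 1 = ((p a).takeUntil a' hmem).getVert 1 := by
        conv_lhs => rw [← (p a).take_spec hmem]
        exact hpre _ _ (by rw [he]; exact hlen1 ha' (p a'))
      rw [hstep]
      simp only [this, he]
    · have hq' : ((p a).concat hadj).IsPath := by
        rw [← Walk.isPath_reverse_iff, Walk.reverse_concat, Walk.cons_isPath_iff]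
        refine ⟨(hspec a).1.reverse, ?_⟩
        simp [Walk.support_reverse, hmem]
      have he : (p a).concat hadj = p a' := (hspec a').2 _ hq'
      have : ((p a).concat hadj).getVert 1 = (p a).getVert 1 :=
        hpre _ _ (hlen1 ha (p a))
      rw [hstep]
      simp only [← he, this]
  -- the retraction onto the copy `vH`
  set r : α × β → β := fun z => if z.1 = v then z.2 else f (step z.1) with hr
  have hredge : ∀ {z w : α × β}, (sierpinskiProd G H f).Adj z w →
      r z = r w ∨ H.Adj (r z) (r w) := by
    rintro z w (⟨he, hH'⟩ | ⟨hadj, hb, hb'⟩)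
    · by_cases hz : z.1 = v
      · right; rw [hr]; simp only [if_pos hz, if_pos (he ▸ hz)]; exact hH'
      · left; rw [hr]; simp only [if_neg hz, if_neg (he ▸ hz), he]
    · left
      by_cases hz : z.1 = v
      · by_cases hw : w.1 = v
        · have hvv : G.Adj v v := by rw [hz, hw] at hadj; exact hadj
          exact absurd hvv (G.loopless.irrefl v)
        · rw [hr]
          simp only [if_pos hz, if_neg hw, hb, hstepA w.1 (by rw [← hz]; exact hadj)]
      · by_cases hw : w.1 = v
        · rw [hr]
          simp only [if_neg hz, if_pos hw, hb',
            hstepA z.1 (by rw [← hw]; exact hadj.symm)]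
        · rw [hr]
          simp only [if_neg hz, if_neg hw, hstepB z.1 w.1 hadj hz hw]
  have hrdist : ∀ {z w : α × β} (q : (sierpinskiProd G H f).Walk z w),
      H.dist (r z) (r w) ≤ q.length := by
    intro z w q
    induction q with
    | nil => simp
    | @cons a m b h q ih =>
        calc H.dist (r a) (r b) ≤ H.dist (r a) (r m) + H.dist (r m) (r b) :=
              h2.isConnected.dist_triangle
          _ ≤ 1 + q.length := by
              refine add_le_add ?_ ih
              rcases hredge h with he | ha
              · rw [he, SimpleGraph.dist_self]; omega
              · exact le_of_eq (dist_eq_one_iff_adj.2 ha)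
          _ = (Walk.cons h q).length := by rw [Walk.length_cons]; omega
  refine le_antisymm ?_ ?_
  · obtain ⟨q, hq⟩ := h2.isConnected.exists_walk_length_eq_dist x y
    calc (sierpinskiProd G H f).dist (v, x) (v, y) ≤ (liftWalk G H f v q).length :=
          dist_le _
      _ = H.dist x y := by rw [liftWalk_length]; exact hq
  · obtain ⟨q, hq⟩ := h2.isConnected.exists_walk_length_eq_dist x y
    have hreach : (sierpinskiProd G H f).Reachable (v, x) (v, y) := ⟨liftWalk G H f v q⟩
    obtain ⟨W, hW⟩ := hreach.exists_walk_length_eq_dist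
    have := hrdist W
    rw [hr] at this
    simpa [hW] using this

end Aux

theorem sierpinskiProd_restriction_resolves {α β : Type*} [Fintype α] [Fintype β]
    (T₁ : SimpleGraph α) (T₂ : SimpleGraph β) (h1 : T₁.IsTree) (h2 : T₂.IsTree)
    (hnp : ¬ IsPathGraph T₂) (f : α → β) (v : α) (B : Set (α × β))
    (hB : IsResolvingSet (sierpinskiProd T₁ T₂ f) B) :
    {h : β | ∃ g', T₁.Adj v g' ∧ h = f g'}.ncard ≤ (T₁.neighborSet v).ncard ∧
      IsResolvingSet T₂ ({h : β | (v, h) ∈ B} ∪ {h : β | ∃ g', T₁.Adj v g' ∧ h = f g'}) := by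
  classical
  constructor
  · have himg : {h : β | ∃ g', T₁.Adj v g' ∧ h = f g'} = f '' (T₁.neighborSet v) := by
      ext h
      simp only [Set.mem_setOf_eq, Set.mem_image, mem_neighborSet]
      constructor
      · rintro ⟨g', hg, rfl⟩; exact ⟨g', hg, rfl⟩
      · rintro ⟨g', hg, rfl⟩; exact ⟨g', hg, rfl⟩
    rw [himg]
    exact Set.ncard_image_le (Set.toFinite _)
  · set P := sierpinskiProd T₁ T₂ f with hP
    have hPconn : P.Connected := sierpinskiProd_connected h1.isConnected h2.isConnected
    have key : ∀ u w : β,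
        (∀ s ∈ ({h : β | (v, h) ∈ B} ∪ {h : β | ∃ g', T₁.Adj v g' ∧ h = f g'}),
          T₂.dist u s = T₂.dist w s) →
        ∀ s ∈ B, P.dist (v, u) s ≤ P.dist (v, w) s := by
      intro u w huw s hs
      by_cases hsv : s.1 = v
      · obtain ⟨sa, sb⟩ := s
        dsimp at hsv
        subst hsv
        rw [hP, sierpinskiProd_copy_dist h1 h2 f, sierpinskiProd_copy_dist h1 h2 f]
        exact le_of_eq (huw sb (Set.mem_union_left _ hs))
      · obtain ⟨W, hW⟩ := hPconn.exists_walk_length_eq_dist (v, w) s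
        obtain ⟨g', hg', hmem⟩ := sierpinskiProd_crossing W rfl hsv
        have hdu : T₂.dist u (f g') = T₂.dist w (f g') :=
          huw (f g') (Set.mem_union_right _ ⟨g', hg', rfl⟩)
        calc P.dist (v, u) s ≤ P.dist (v, u) (v, f g') + P.dist (v, f g') s :=
              hPconn.dist_triangle
          _ = T₂.dist u (f g') + P.dist (v, f g') s := by
              rw [hP, sierpinskiProd_copy_dist h1 h2 f]
          _ = T₂.dist w (f g') + P.dist (v, f g') s := by rw [hdu]
          _ = P.dist (v, w) (v, f g') + P.dist (v, f g') s := by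
              rw [hP, sierpinskiProd_copy_dist h1 h2 f]
          _ ≤ (W.takeUntil _ hmem).length + (W.dropUntil _ hmem).length :=
              add_le_add (dist_le _) (dist_le _)
          _ = W.length := by rw [← Walk.length_append, W.take_spec hmem]
          _ = P.dist (v, w) s := hW
    intro u w huw
    have heq : ∀ s ∈ B, P.dist (v, u) s = P.dist (v, w) s := fun s hs =>
      le_antisymm (key u w huw s hs)
        (key w u (fun c hc => (huw c hc).symm) s hs)
    have := hB (v, u) (v, w) heq
    exact congrArg Prod.snd this
end
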